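/- ∑_{k=0}^∞ (30k − 7)·(−2)^k/C(4k,2k) = −(3π + 64)/6. -/

import Mathlib

/-!
By the Beta integral, `1 / C(4k, 2k) = (4k + 1) ∫₀¹ (t(1-t))^(2k) dt`, so the series is
`∫₀¹ ∑ₖ (30k - 7)(4k + 1) xᵏ dt` with `x = -2(t(1-t))² ∈ [-1/8, 0]`. The inner power series is a
combination of `∑ C(k+2, 2) xᵏ`, `∑ k xᵏ` and `∑ xᵏ`, i.e. a rational function of
`1 - x = 1 + 2(t(1-t))²`. That function has an elementary antiderivative on `[0, 1]`, a rational
part plus an arctangent, and the arctangent contributes `arctan 1 - arctan (-1) = π/2`.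
-/

open Real Set intervalIntegral MeasureTheory
open scoped Nat

theorem integral_pow_mul_one_sub_pow (a b : ℕ) :
    ∫ x in (0 : ℝ)..1, x ^ a * (1 - x) ^ b = (a ! * b ! : ℝ) / (a + b + 1) ! := by
  have hB := Complex.betaIntegral_eq_Gamma_mul_div (a + 1) (b + 1)
    (by norm_cast; omega) (by norm_cast; omega)
  rw [show (a + 1 + (b + 1) : ℂ) = (a + b + 1 : ℕ) + 1 by push_cast; ring,
    Complex.Gamma_nat_eq_factorial, Complex.Gamma_nat_eq_factorial,
    Complex.Gamma_nat_eq_factorial, Complex.betaIntegral] at hB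
  simp only [add_sub_cancel_right, Complex.cpow_natCast] at hB
  rw [← Complex.ofReal_inj, ← intervalIntegral.integral_ofReal]
  push_cast
  exact hB

theorem inv_choose_eq_integral (a b : ℕ) :
    ((a + b).choose a : ℝ)⁻¹ = (a + b + 1) * ∫ x in (0 : ℝ)..1, x ^ a * (1 - x) ^ b := by
  rw [integral_pow_mul_one_sub_pow, Nat.cast_choose ℝ (Nat.le_add_right a b),
    Nat.add_sub_cancel_left, Nat.factorial_succ]
  push_cast
  field_simp

theorem div_choose_eq_integral (k : ℕ) :
    (30 * (k : ℝ) - 7) * (-2) ^ k / (4 * k).choose (2 * k)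
      = ∫ t in (0 : ℝ)..1, (30 * k - 7) * (4 * k + 1) * (-2 * (t * (1 - t)) ^ 2) ^ k := by
  have hchoose := inv_choose_eq_integral (2 * k) (2 * k)
  rw [← two_mul, ← mul_assoc, show (2 * 2 : ℕ) = 4 from rfl] at hchoose
  rw [div_eq_mul_inv, hchoose]
  have hintegrand (t : ℝ) : (30 * k - 7) * (4 * k + 1) * (-2 * (t * (1 - t)) ^ 2) ^ k
      = (30 * k - 7) * (4 * k + 1) * (-2) ^ k * (t ^ (2 * k) * (1 - t) ^ (2 * k)) := by
    rw [mul_pow, ← pow_mul, mul_pow, pow_mul, pow_mul]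
    ring
  simp_rw [hintegrand, intervalIntegral.integral_const_mul]
  push_cast
  ring

theorem hasSum_quadratic_mul_geometric {𝕜 : Type*} [NormedField 𝕜] [HasSummableGeomSeries 𝕜]
    {x : 𝕜} (hx : ‖x‖ < 1) :
    HasSum (fun k : ℕ => (30 * k - 7) * (4 * k + 1) * x ^ k)
      (111 / (1 - x) - 358 / (1 - x) ^ 2 + 240 / (1 - x) ^ 3) := by
  have h1x : 1 - x ≠ 0 := sub_ne_zero.2 (by rintro rfl; simp at hx)
  have h := ((hasSum_choose_mul_geometric_of_norm_lt_one 2 hx).mul_left 240).sub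
    (((hasSum_coe_mul_geometric_of_norm_lt_one hx).mul_left 358).add
      ((hasSum_geometric_of_norm_lt_one hx).mul_left 247))
  rw [show (111 / (1 - x) - 358 / (1 - x) ^ 2 + 240 / (1 - x) ^ 3 : 𝕜) =
    240 * (1 / (1 - x) ^ (2 + 1)) - (358 * (x / (1 - x) ^ 2) + 247 * (1 - x)⁻¹) by
    field_simp; ring]
  refine h.congr_fun fun k => ?_
  have hchoose : ((k + 2).choose 2 * 2 : 𝕜) = (k + 2) * (k + 1) := by
    have h : (k + 2).choose 2 * 2 = (k + 2) * (k + 1) := by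
      rw [← Nat.choose_one_right (k + 1)]
      exact (Nat.add_one_mul_choose_eq (k + 1) 1).symm
    simpa using congrArg (Nat.cast : ℕ → 𝕜) h
  linear_combination (-120 * x ^ k) * hchoose

theorem norm_neg_two_mul_sq_mul_one_sub_le {t : ℝ} (h0 : 0 ≤ t) (h1 : t ≤ 1) :
    ‖-2 * (t * (1 - t)) ^ 2‖ ≤ 1 / 8 := by
  have hu : 0 ≤ t * (1 - t) := mul_nonneg h0 (sub_nonneg.2 h1)
  have hu4 : t * (1 - t) ≤ 1 / 4 := by nlinarith [sq_nonneg (2 * t - 1)]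
  rw [norm_mul, norm_pow, Real.norm_of_nonneg hu]
  norm_num
  nlinarith

theorem hasSum_integral_quadratic_mul_geometric :
    HasSum
      (fun k : ℕ => ∫ t in (0 : ℝ)..1, (30 * k - 7) * (4 * k + 1) * (-2 * (t * (1 - t)) ^ 2) ^ k)
      (∫ t in (0 : ℝ)..1, (111 / (1 + 2 * (t * (1 - t)) ^ 2)
        - 358 / (1 + 2 * (t * (1 - t)) ^ 2) ^ 2 + 240 / (1 + 2 * (t * (1 - t)) ^ 2) ^ 3)) := by
  have hx (t : ℝ) (ht : t ∈ uIoc (0 : ℝ) 1) : ‖-2 * (t * (1 - t)) ^ 2‖ ≤ 1 / 8 := by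
    rw [uIoc_of_le zero_le_one] at ht
    exact norm_neg_two_mul_sq_mul_one_sub_le ht.1.le ht.2
  refine intervalIntegral.hasSum_integral_of_dominated_convergence
    (fun k _ => (122 * k ^ 2 + 7) * (1 / 8) ^ k)
    (fun k => (by fun_prop : Continuous _).aestronglyMeasurable) ?_ ?_ intervalIntegrable_const ?_
  · refine fun k => ae_of_all _ fun t ht => ?_
    have hcoeff : ‖(30 * (k : ℝ) - 7) * (4 * k + 1)‖ ≤ 122 * k ^ 2 + 7 := by
      have hk : (k : ℝ) ≤ k ^ 2 := by
        rcases k.eq_zero_or_pos with rfl | hk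
        · simp
        · exact_mod_cast Nat.le_self_pow two_ne_zero k
      rw [Real.norm_eq_abs, abs_le]
      constructor <;> nlinarith
    rw [norm_mul, norm_pow]
    exact mul_le_mul hcoeff (pow_le_pow_left₀ (norm_nonneg _) (hx t ht) k) (by positivity)
      (by positivity)
  · have h8 : ‖(1 / 8 : ℝ)‖ < 1 := by norm_num
    refine ae_of_all _ fun t _ => ?_
    simpa [add_mul, mul_assoc] using
      ((summable_pow_mul_geometric_of_norm_lt_one 2 h8).mul_left 122).add
        ((summable_geometric_of_norm_lt_one h8).mul_left 7)
  · refine ae_of_all _ fun t ht => ?_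
    have := hasSum_quadratic_mul_geometric ((hx t ht).trans_lt (by norm_num))
    simpa only [sub_neg_eq_add, neg_mul] using this

-- `arctan (s + √2) + arctan (s - √2)` for `s = 1 - 2t`, combined by the addition formula.
theorem hasDerivAt_rational_add_arctan {t : ℝ} (ht : (1 - 2 * t) ^ 2 ≠ 3) :
    HasDerivAt
      (fun t : ℝ => (1 - 2 * t) * (16 + 17 * (t * (1 - t)) + 112 * (t * (1 - t)) ^ 2
          - 6 * (t * (1 - t)) ^ 3) / (3 * (1 + 2 * (t * (1 - t)) ^ 2) ^ 2)
        + arctan (2 * (1 - 2 * t) / (3 - (1 - 2 * t) ^ 2)))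
      (111 / (1 + 2 * (t * (1 - t)) ^ 2) - 358 / (1 + 2 * (t * (1 - t)) ^ 2) ^ 2
        + 240 / (1 + 2 * (t * (1 - t)) ^ 2) ^ 3) t := by
  have hs : HasDerivAt (fun t : ℝ => 1 - 2 * t) (-2) t := by
    simpa using ((hasDerivAt_id t).const_mul 2).const_sub 1
  have hu : HasDerivAt (fun t : ℝ => t * (1 - t)) (1 - 2 * t) t := by
    have := (hasDerivAt_id t).fun_mul ((hasDerivAt_id t).const_sub 1)
    simp only [id] at this
    exact this.congr_deriv (by ring)
  have hQ := ((((hu.const_mul 17).const_add 16).fun_add ((hu.fun_pow 2).const_mul 112)).fun_sub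
    ((hu.fun_pow 3).const_mul 6))
  have hD := ((hu.fun_pow 2).const_mul 2).const_add 1
  have hD0 : 1 + 2 * (t * (1 - t)) ^ 2 ≠ 0 := by positivity
  have hq0 : 3 - (1 - 2 * t) ^ 2 ≠ 0 := sub_ne_zero.2 (Ne.symm ht)
  have harg := (hs.const_mul 2).fun_div ((hs.fun_pow 2).const_sub 3) hq0
  refine (((hs.fun_mul hQ).fun_div ((hD.fun_pow 2).const_mul 3) (by simp [hD0])).fun_add
    harg.arctan).congr_deriv ?_
  have harctan : 1 + (2 * (1 - 2 * t) / (3 - (1 - 2 * t) ^ 2)) ^ 2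
      = 8 * (1 + 2 * (t * (1 - t)) ^ 2) / (3 - (1 - 2 * t) ^ 2) ^ 2 := by
    field_simp
    ring
  rw [harctan]
  field_simp
  ring

theorem integral_rational_eq :
    ∫ t in (0 : ℝ)..1, (111 / (1 + 2 * (t * (1 - t)) ^ 2) - 358 / (1 + 2 * (t * (1 - t)) ^ 2) ^ 2
        + 240 / (1 + 2 * (t * (1 - t)) ^ 2) ^ 3) = -(3 * π + 64) / 6 := by
  rw [integral_eq_sub_of_hasDerivAt (fun t ht => hasDerivAt_rational_add_arctan ?_)
    (Continuous.intervalIntegrable (by fun_prop (disch := intro; positivity)) 0 1)]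
  · norm_num [arctan_one, arctan_neg]
    ring
  · rw [uIcc_of_le zero_le_one] at ht
    nlinarith [ht.1, ht.2]

theorem stmt_15 :
    ∑' k : ℕ, (30 * (k : ℝ) - 7) * (-2) ^ k / (Nat.choose (4 * k) (2 * k) : ℝ) =
      -(3 * Real.pi + 64) / 6 := by
  simp_rw [div_choose_eq_integral]
  rw [hasSum_integral_quadratic_mul_geometric.tsum_eq, integral_rational_eq]
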